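/- arXiv:1103.4063 — 2 statements merged into one kernel-verified Lean document; each statement's English description precedes it below -/
import Mathlib

section
/- Let ω : ℤ → ℝ^{>0} be a weight satisfying ω(k) ≥ C(1 + |k|) for all k ∈ ℤ and some constant C > 0. Then the linear functional D : ℓ¹_ω(ℤ) → ℂ defined by D(f) = Σ_{k∈ℤ} k·f(k) is bounded, and it is a point derivation at the augmentation character ε(f) = Σ_k f(k): D(f * g) = D(f)ε(g) + ε(f)D(g) for all f, g ∈ ℓ¹_ω(ℤ). Consequently the closure of I² is strictly contained in I, where I = ker ε, i.e. the one-point set corresponding to ε is not a set of spectral synthesis for ℓ¹_ω(ℤ). -/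
/-!
The weight bound `ω k ≥ C (1 + |k|)` makes both `f` and `k ↦ k • f k` absolutely summable for
`f ∈ ℓ¹_ω(ℤ)`, which bounds `D`. Writing `n = k + (n - k)` inside `(f * g)(n)` splits
`D(f * g)` into the total sums of the convolutions `(k • f) * g` and `f * (k • g)`, and the Cauchy
product over `ℤ` evaluates these as `D(f) ε(g)` and `ε(f) D(g)`. Hence `D` kills `I²` (and so
its closure), whereas `δ₁ - δ₀ ∈ I` has `D(δ₁ - δ₀) = 1`.
-/

def Equiv.addSubShear (G : Type*) [AddCommGroup G] : G × G ≃ G × G where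
  toFun p := (p.2, p.1 - p.2)
  invFun q := (q.1 + q.2, q.1)
  left_inv p := by simp
  right_inv q := by simp

section CauchyProduct

variable {G R : Type*} [AddCommGroup G] [NormedCommRing R] [CompleteSpace R] {f g : G → R}

theorem hasSum_mul_sub_of_summable_norm (hf : Summable fun k => ‖f k‖)
    (hg : Summable fun k => ‖g k‖) :
    HasSum (fun p : G × G => f p.2 * g (p.1 - p.2)) ((∑' k, f k) * ∑' k, g k) := by
  rw [tsum_mul_tsum_of_summable_norm hf hg]
  exact (Equiv.addSubShear G).hasSum_iff.2 (summable_mul_of_summable_norm hf hg).hasSum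

theorem hasSum_tsum_mul_sub_of_summable_norm (hf : Summable fun k => ‖f k‖)
    (hg : Summable fun k => ‖g k‖) :
    HasSum (fun n => ∑' k, f k * g (n - k)) ((∑' k, f k) * ∑' k, g k) :=
  have h := hasSum_mul_sub_of_summable_norm hf hg
  h.prod_fiberwise fun n => (h.summable.prod_factor n).hasSum

theorem summable_mul_sub_of_summable_norm (hf : Summable fun k => ‖f k‖)
    (hg : Summable fun k => ‖g k‖) (n : G) : Summable fun k => f k * g (n - k) :=
  (hasSum_mul_sub_of_summable_norm hf hg).summable.prod_factor n

end CauchyProduct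

section IntMoment

variable {R : Type*} [NormedCommRing R] [CompleteSpace R] {f g : ℤ → R}

theorem intCast_mul_tsum_mul_sub (hf : Summable fun k => ‖f k‖)
    (hf' : Summable fun k : ℤ => ‖(k : R) * f k‖) (hg : Summable fun k => ‖g k‖)
    (hg' : Summable fun k : ℤ => ‖(k : R) * g k‖) (n : ℤ) :
    (n : R) * ∑' k, f k * g (n - k) =
      ∑' k : ℤ, (k : R) * f k * g (n - k) + ∑' k, f k * (((n - k : ℤ) : R) * g (n - k)) := by
  rw [← (summable_mul_sub_of_summable_norm hf hg n).tsum_mul_left,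
    ← (summable_mul_sub_of_summable_norm hf' hg n).tsum_add
      (summable_mul_sub_of_summable_norm hf hg' n)]
  congr 1 with k
  push_cast
  ring

theorem tsum_intCast_mul_tsum_mul_sub (hf : Summable fun k => ‖f k‖)
    (hf' : Summable fun k : ℤ => ‖(k : R) * f k‖) (hg : Summable fun k => ‖g k‖)
    (hg' : Summable fun k : ℤ => ‖(k : R) * g k‖) :
    ∑' n : ℤ, (n : R) * ∑' k, f k * g (n - k) =
      (∑' k : ℤ, (k : R) * f k) * (∑' k, g k) + (∑' k, f k) * ∑' k : ℤ, (k : R) * g k := by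
  simp_rw [intCast_mul_tsum_mul_sub hf hf' hg hg']
  exact ((hasSum_tsum_mul_sub_of_summable_norm hf' hg).add
    (hasSum_tsum_mul_sub_of_summable_norm hf hg')).tsum_eq

end IntMoment

section Weight

variable {ω : ℤ → ℝ} {C : ℝ} {f : ℤ → ℂ}

theorem one_add_abs_mul_norm_le_of_weight (hC : 0 < C)
    (hbd : ∀ k : ℤ, C * (1 + |(k : ℝ)|) ≤ ω k) (k : ℤ) :
    (1 + |(k : ℝ)|) * ‖f k‖ ≤ C⁻¹ * (‖f k‖ * ω k) := by
  rw [le_inv_mul_iff₀ hC, ← mul_assoc, mul_comm _ (ω k)]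
  exact mul_le_mul_of_nonneg_right (hbd k) (norm_nonneg _)

theorem summable_norm_of_weight (hC : 0 < C) (hbd : ∀ k : ℤ, C * (1 + |(k : ℝ)|) ≤ ω k)
    (hf : Summable fun k => ‖f k‖ * ω k) : Summable fun k => ‖f k‖ :=
  (hf.mul_left C⁻¹).of_nonneg_of_le (fun _ => norm_nonneg _) fun k =>
    (le_mul_of_one_le_left (norm_nonneg _) (by simp)).trans
      (one_add_abs_mul_norm_le_of_weight hC hbd k)

theorem norm_intCast_mul_le_of_weight (hC : 0 < C) (hbd : ∀ k : ℤ, C * (1 + |(k : ℝ)|) ≤ ω k)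
    (k : ℤ) : ‖(k : ℂ) * f k‖ ≤ C⁻¹ * (‖f k‖ * ω k) := by
  rw [norm_mul, Complex.norm_intCast]
  exact (mul_le_mul_of_nonneg_right (by simp) (norm_nonneg _)).trans
    (one_add_abs_mul_norm_le_of_weight hC hbd k)

theorem summable_norm_intCast_mul_of_weight (hC : 0 < C)
    (hbd : ∀ k : ℤ, C * (1 + |(k : ℝ)|) ≤ ω k) (hf : Summable fun k => ‖f k‖ * ω k) :
    Summable fun k : ℤ => ‖(k : ℂ) * f k‖ :=
  (hf.mul_left C⁻¹).of_nonneg_of_le (fun _ => norm_nonneg _)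
    (norm_intCast_mul_le_of_weight hC hbd)

theorem norm_tsum_intCast_mul_le_of_weight (hC : 0 < C)
    (hbd : ∀ k : ℤ, C * (1 + |(k : ℝ)|) ≤ ω k) (hf : Summable fun k => ‖f k‖ * ω k) :
    ‖∑' k : ℤ, (k : ℂ) * f k‖ ≤ C⁻¹ * ∑' k, ‖f k‖ * ω k :=
  tsum_of_norm_bounded (hf.hasSum.mul_left C⁻¹) (norm_intCast_mul_le_of_weight hC hbd)

end Weight

theorem exists_tsum_eq_zero_tsum_intCast_mul_ne_zero (ω : ℤ → ℝ) :
    ∃ f : ℤ → ℂ, Summable (fun k => ‖f k‖ * ω k) ∧ ∑' k, f k = 0 ∧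
      ∑' k : ℤ, (k : ℂ) * f k ≠ 0 := by
  set f : ℤ → ℂ := Pi.single 1 1 - Pi.single 0 1
  have hsupp (k : ℤ) (hk : k ∉ ({0, 1} : Finset ℤ)) : f k = 0 := by
    simp_all [f]
  refine ⟨f, summable_of_ne_finset_zero (s := {0, 1}) fun k hk => by simp [hsupp k hk], ?_, ?_⟩
  · rw [tsum_eq_sum hsupp]
    simp [f]
  · rw [tsum_eq_sum (s := {0, 1}) fun k hk => by simp [hsupp k hk]]
    simp [f]

theorem stmt_14_general (ω : ℤ → ℝ)
    (C : ℝ) (hC : 0 < C) (hbd : ∀ k : ℤ, C * (1 + |(k : ℝ)|) ≤ ω k) :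
    -- boundedness of D
    (∃ M : ℝ, 0 < M ∧ ∀ f : ℤ → ℂ, Summable (fun k => ‖f k‖ * ω k) →
        Summable (fun k : ℤ => (k : ℂ) * f k) ∧
        ‖∑' (k : ℤ), (k : ℂ) * f k‖ ≤ M * ∑' (k : ℤ), ‖f k‖ * ω k) ∧
    -- derivation identity at the augmentation character
    (∀ f g : ℤ → ℂ, Summable (fun k => ‖f k‖ * ω k) →
        Summable (fun k => ‖g k‖ * ω k) →
        (∑' (n : ℤ), (n : ℂ) * ∑' (k : ℤ), f k * g (n - k)) =
          (∑' (k : ℤ), (k : ℂ) * f k) * (∑' (k : ℤ), g k) +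
            (∑' (k : ℤ), f k) * (∑' (k : ℤ), (k : ℂ) * g k)) ∧
    -- D vanishes on convolution products of elements of I = ker ε ...
    (∀ f g : ℤ → ℂ, Summable (fun k => ‖f k‖ * ω k) →
        Summable (fun k => ‖g k‖ * ω k) →
        (∑' (k : ℤ), f k) = 0 → (∑' (k : ℤ), g k) = 0 →
        (∑' (n : ℤ), (n : ℂ) * ∑' (k : ℤ), f k * g (n - k)) = 0) ∧
    -- ... but not on all of I: so the closure of I² is strictly inside I
    (∃ f : ℤ → ℂ, Summable (fun k => ‖f k‖ * ω k) ∧ (∑' (k : ℤ), f k) = 0 ∧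
        (∑' (k : ℤ), (k : ℂ) * f k) ≠ 0) := by
  have hε {f : ℤ → ℂ} (hf : Summable fun k => ‖f k‖ * ω k) := summable_norm_of_weight hC hbd hf
  have hD {f : ℤ → ℂ} (hf : Summable fun k => ‖f k‖ * ω k) :=
    summable_norm_intCast_mul_of_weight hC hbd hf
  have hLeibniz (f g : ℤ → ℂ) (hf : Summable fun k => ‖f k‖ * ω k)
      (hg : Summable fun k => ‖g k‖ * ω k) :=
    tsum_intCast_mul_tsum_mul_sub (hε hf) (hD hf) (hε hg) (hD hg)
  refine ⟨⟨C⁻¹, inv_pos.2 hC, fun f hf => ⟨(hD hf).of_norm,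
    norm_tsum_intCast_mul_le_of_weight hC hbd hf⟩⟩, hLeibniz, ?_,
    exists_tsum_eq_zero_tsum_intCast_mul_ne_zero ω⟩
  intro f g hf hg hf0 hg0
  rw [hLeibniz f g hf hg, hf0, hg0, mul_zero, zero_mul, add_zero]

/-- If a weight `ω` on `ℤ` dominates `C(1+|k|)`, then `D(f) = Σ k·f(k)` is a bounded
point derivation at the augmentation character `ε(f) = Σ f(k)` of `ℓ¹_ω(ℤ)`:
`D(f*g) = D(f)ε(g) + ε(f)D(g)`, `D` vanishes on products of elements of `I = ker ε`
but not on all of `I`; hence `{1}` is not a set of spectral synthesis. -/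
theorem stmt_14 (ω : ℤ → ℝ) (hpos : ∀ k, 0 < ω k)
    (hsub : ∀ m n : ℤ, ω (m + n) ≤ ω m * ω n)
    (C : ℝ) (hC : 0 < C) (hbd : ∀ k : ℤ, C * (1 + |(k : ℝ)|) ≤ ω k) :
    -- boundedness of D
    (∃ M : ℝ, 0 < M ∧ ∀ f : ℤ → ℂ, Summable (fun k => ‖f k‖ * ω k) →
        Summable (fun k : ℤ => (k : ℂ) * f k) ∧
        ‖∑' (k : ℤ), (k : ℂ) * f k‖ ≤ M * ∑' (k : ℤ), ‖f k‖ * ω k) ∧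
    -- derivation identity at the augmentation character
    (∀ f g : ℤ → ℂ, Summable (fun k => ‖f k‖ * ω k) →
        Summable (fun k => ‖g k‖ * ω k) →
        (∑' (n : ℤ), (n : ℂ) * ∑' (k : ℤ), f k * g (n - k)) =
          (∑' (k : ℤ), (k : ℂ) * f k) * (∑' (k : ℤ), g k) +
            (∑' (k : ℤ), f k) * (∑' (k : ℤ), (k : ℂ) * g k)) ∧
    -- D vanishes on convolution products of elements of I = ker ε ...
    (∀ f g : ℤ → ℂ, Summable (fun k => ‖f k‖ * ω k) →
        Summable (fun k => ‖g k‖ * ω k) →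
        (∑' (k : ℤ), f k) = 0 → (∑' (k : ℤ), g k) = 0 →
        (∑' (n : ℤ), (n : ℂ) * ∑' (k : ℤ), f k * g (n - k)) = 0) ∧
    -- ... but not on all of I: so the closure of I² is strictly inside I
    (∃ f : ℤ → ℂ, Summable (fun k => ‖f k‖ * ω k) ∧ (∑' (k : ℤ), f k) = 0 ∧
        (∑' (k : ℤ), (k : ℂ) * f k) ≠ 0) :=
  stmt_14_general ω C hC hbd
end

section
/- Let m ≥ 1 and let ω : ℕ^m → ℝ be a function with ω(μ) ≥ 1 for all μ, submultiplicative in the sense ω(μ + ν) ≤ ω(μ)ω(ν). Suppose there exist ρ > 1 and, for each n ≥ 1, an element μ_n ∈ ℕ^m with |μ_n| := Σ_j (μ_n)_j = n and ω(μ_n) ≥ ρ^n. Then there exists an index j ∈ {1,...,m} such that lim_{k→∞} ω(k·e_j)^{1/k} ≥ ρ^{1/m} > 1, where e_j is the j-th standard basis vector. -/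
/-!
Pass to `v = log ω`, which is subadditive. Along each coordinate ray Fekete's lemma gives the
rate `λ_j = lim_k v(k e_j) / k`, and for every `a > λ_j` the bound `v(k e_j) ≤ a k + C_j` holds
for all `k`. Splitting `μ_n` into its coordinate rays, `n log ρ ≤ v(μ_n) ≤ a n + ∑ C_j` for
every `a > max_j λ_j`, so `log ρ ≤ max_j λ_j`: the best direction already grows at rate `ρ`,
which is more than the claimed `ρ^{1/m}`.
-/

open Filter Topology

lemma log_add_le_of_submultiplicative {M : Type*} [Add M] {ω : M → ℝ} (hpos : ∀ x, 0 < ω x)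
    (hsub : ∀ x y, ω (x + y) ≤ ω x * ω y) (x y : M) :
    Real.log (ω (x + y)) ≤ Real.log (ω x) + Real.log (ω y) := by
  rw [← Real.log_mul (hpos x).ne' (hpos y).ne']
  exact Real.log_le_log (hpos _) (hsub x y)

lemma subadditive_comp_single {ι : Type*} [DecidableEq ι] {v : (ι → ℕ) → ℝ}
    (hv : ∀ x y, v (x + y) ≤ v x + v y) (j : ι) : Subadditive fun k => v (Pi.single j k) :=
  fun a b => by simpa only [Pi.single_add] using hv (Pi.single j a) (Pi.single j b)

lemma exists_le_mul_add_of_tendsto_div {u : ℕ → ℝ} {l a : ℝ}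
    (hu : Tendsto (fun n : ℕ => u n / n) atTop (𝓝 l)) (hla : l < a) :
    ∃ C, ∀ n : ℕ, u n ≤ a * n + C := by
  have hev : ∀ᶠ n : ℕ in atTop, u n - a * n ≤ 0 := by
    filter_upwards [hu.eventually (eventually_lt_nhds hla), eventually_ge_atTop 1] with n hn hn1
    have hn0 : (0 : ℝ) < n := by exact_mod_cast hn1
    rw [div_lt_iff₀ hn0] at hn
    linarith
  obtain ⟨C, hC⟩ := (isBoundedUnder_of_eventually_le hev).bddAbove_range
  exact ⟨C, fun n => by linarith [hC ⟨n, rfl⟩]⟩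

lemma le_of_forall_nat_mul_le_mul_add {c a C : ℝ} (h : ∀ n : ℕ, 1 ≤ n → n * c ≤ n * a + C) :
    c ≤ a := by
  have hle : ∀ᶠ n : ℕ in atTop, c - a ≤ C / n := by
    filter_upwards [eventually_ge_atTop 1] with n hn
    have hn0 : (0 : ℝ) < n := by exact_mod_cast hn
    rw [le_div_iff₀ hn0]
    linarith [h n hn]
  linarith [ge_of_tendsto (tendsto_const_div_atTop_nhds_zero_nat C) hle]

section Directions

variable {ι : Type*} [Fintype ι] [DecidableEq ι] {v : (ι → ℕ) → ℝ}

lemma le_mul_sum_add_of_le_single [Nonempty ι] (hv : ∀ x y, v (x + y) ≤ v x + v y) {a : ℝ}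
    {C : ι → ℝ} (hC : ∀ j k, v (Pi.single j k) ≤ a * k + C j) (x : ι → ℕ) :
    v x ≤ a * (∑ j, x j : ℕ) + ∑ j, C j :=
  calc v x = v (∑ j, Pi.single j (x j)) := by rw [Finset.univ_sum_single]
    _ ≤ ∑ j, v (Pi.single j (x j)) :=
      Finset.le_sum_nonempty_of_subadditive v hv Finset.univ_nonempty _
    _ ≤ ∑ j, (a * x j + C j) := Finset.sum_le_sum fun j _ => hC j (x j)
    _ = a * (∑ j, x j : ℕ) + ∑ j, C j := by
      rw [Finset.sum_add_distrib, ← Finset.mul_sum, Nat.cast_sum]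

lemma exists_le_lim_single [Nonempty ι] (hv : ∀ x y, v (x + y) ≤ v x + v y) {lam : ι → ℝ}
    (hlam : ∀ j, Tendsto (fun k : ℕ => v (Pi.single j k) / k) atTop (𝓝 (lam j)))
    {x : ℕ → ι → ℕ} {c : ℝ} (hx : ∀ n, 1 ≤ n → ∑ j, x n j = n)
    (hc : ∀ n, 1 ≤ n → n * c ≤ v (x n)) : ∃ j, c ≤ lam j := by
  obtain ⟨j₀, hj₀⟩ := Finite.exists_max lam
  refine ⟨j₀, le_of_forall_gt_imp_ge_of_dense fun a ha => ?_⟩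
  choose C hC using fun j => exists_le_mul_add_of_tendsto_div (hlam j) ((hj₀ j).trans_lt ha)
  refine le_of_forall_nat_mul_le_mul_add (C := ∑ j, C j) fun n hn => ?_
  calc n * c ≤ v (x n) := hc n hn
    _ ≤ a * (∑ j, x n j : ℕ) + ∑ j, C j := le_mul_sum_add_of_le_single hv hC (x n)
    _ = n * a + ∑ j, C j := by rw [hx n hn, mul_comm]

end Directions

lemma tendsto_rpow_inv_of_tendsto_log_div {f : ℕ → ℝ} {l : ℝ} (hpos : ∀ k, 0 < f k)
    (hf : Tendsto (fun k : ℕ => Real.log (f k) / k) atTop (𝓝 l)) :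
    Tendsto (fun k : ℕ => f k ^ (k : ℝ)⁻¹) atTop (𝓝 (Real.exp l)) := by
  refine ((Real.continuous_exp.tendsto l).comp hf).congr fun k => ?_
  simp only [Function.comp_apply, Real.rpow_def_of_pos (hpos k), div_eq_mul_inv]

/-- Pigeonhole for submultiplicative functions on `ℕ^m`: if `ω ≥ 1` is
submultiplicative and there are `μ_n` with `|μ_n|₁ = n` and `ω(μ_n) ≥ ρ^n` for some
`ρ > 1`, then for some coordinate direction `e_j` the limit
`lim_k ω(k·e_j)^{1/k}` is at least `ρ^{1/m} > 1`. -/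
theorem stmt_15 (m : ℕ) (hm : 1 ≤ m) (ω : (Fin m → ℕ) → ℝ)
    (hω1 : ∀ μ, 1 ≤ ω μ)
    (hsub : ∀ μ ν, ω (μ + ν) ≤ ω μ * ω ν)
    (ρ : ℝ) (hρ : 1 < ρ)
    (μ : ℕ → (Fin m → ℕ))
    (hlen : ∀ n, 1 ≤ n → (∑ j, μ n j) = n)
    (hgrow : ∀ n, 1 ≤ n → ρ ^ n ≤ ω (μ n)) :
    ∃ j : Fin m, ∃ L : ℝ,
      Filter.Tendsto (fun k : ℕ => (ω (Pi.single j k)) ^ ((k : ℝ)⁻¹))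
        Filter.atTop (nhds L) ∧
      ρ ^ ((m : ℝ)⁻¹) ≤ L ∧ 1 < L := by
  have : Nonempty (Fin m) := ⟨⟨0, hm⟩⟩
  have hpos : ∀ x, 0 < ω x := fun x => one_pos.trans_le (hω1 x)
  have hv := log_add_le_of_submultiplicative hpos hsub
  have hray := subadditive_comp_single (v := fun x => Real.log (ω x)) hv
  have hbdd : ∀ j, BddBelow (Set.range fun k : ℕ => Real.log (ω (Pi.single j k)) / k) :=
    fun j => ⟨0, by rintro _ ⟨k, rfl⟩; exact div_nonneg (Real.log_nonneg (hω1 _)) k.cast_nonneg⟩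
  have hlim j := (hray j).tendsto_lim (hbdd j)
  obtain ⟨j, hj⟩ := exists_le_lim_single (v := fun x => Real.log (ω x))
      (c := Real.log ρ) hv hlim hlen fun n hn => by
    rw [← Real.log_pow]
    exact Real.log_le_log (by positivity) (hgrow n hn)
  have hρL : ρ ≤ Real.exp (hray j).lim := by
    rwa [← Real.exp_log (one_pos.trans hρ), Real.exp_le_exp]
  refine ⟨j, _, tendsto_rpow_inv_of_tendsto_log_div (fun _ => hpos _) (hlim j), ?_, hρ.trans_le hρL⟩
  refine (Real.rpow_le_self_of_one_le hρ.le ?_).trans hρL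
  exact inv_le_one_of_one_le₀ (by exact_mod_cast hm)
end
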